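/- Directed colimits of free 𝔽_p[ℤ/p]-modules inside a fixed module: Let p be a prime, H cyclic of order p, M an 𝔽_p[H]-module, and let 𝒯 be a chain (totally ordered family) of free 𝔽_p[H]-submodules of M. Then the union W = ⋃_{S ∈ 𝒯} S is a free 𝔽_p[H]-submodule of M. -/

import Mathlib

/-- The group algebra `𝔽_p[H]` for `H` the cyclic group of order `p`, generated by `σ`. -/
abbrev Sp (p : ℕ) : Type := MonoidAlgebra (ZMod p) (Multiplicative (ZMod p))

/-- The generator `σ` of the cyclic group `H`, as an element of the group algebra. -/
noncomputable def sigma (p : ℕ) : Sp p :=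
  MonoidAlgebra.of (ZMod p) (Multiplicative (ZMod p)) (Multiplicative.ofAdd 1)

/-- Scalar multiplication by `s ∈ 𝔽_p[H]` as an `𝔽_p`-linear endomorphism. -/
noncomputable def smulMap (p : ℕ) (M : Type*) [AddCommGroup M] [Module (Sp p) M]
    [Module (ZMod p) M] [IsScalarTower (ZMod p) (Sp p) M] (s : Sp p) :
    M →ₗ[ZMod p] M :=
  (LinearMap.lsmul (Sp p) M s).restrictScalars (ZMod p)

/-!
Write `τ = σ - 1`. Then `τ ^ p = 0` and the annihilator of `τ` in `𝔽_p[H]` is the line spanned by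
`τ ^ (p - 1)`. Over such a ring a module `N` is free as soon as every `x` with `τ • x = 0` lies in
`τ ^ (p - 1) • N`: lifting an `𝔽_p`-basis of `ker τ` through `τ ^ (p - 1)` gives a map from a free
module which is onto by induction on the nilpotency degree of `τ`, and one-to-one because a nonzero
kernel would contain a nonzero vector killed by `τ`. Free modules satisfy this condition
coordinatewise, and the condition visibly passes to directed unions.
-/

section NilpotentAction

variable {R N : Type*} [CommRing R] [AddCommGroup N] [Module R N] {τ : R} {n : ℕ}

theorem Submodule.eq_top_of_forall_smul_eq_zero (P : Submodule R N) (hτ : τ ^ n = 0)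
    (h : ∀ x : N, τ • x = 0 → ∃ z ∈ P, x = τ ^ (n - 1) • z) : P = ⊤ := by
  suffices ∀ i ≤ n, ∀ x : N, τ ^ i • x = 0 → x ∈ P from
    eq_top_iff.mpr fun x _ => this n le_rfl x (by rw [hτ, zero_smul])
  intro i
  induction i with
  | zero => intro _ x hx; rw [pow_zero, one_smul] at hx; exact hx ▸ P.zero_mem
  | succ i ih =>
    intro hi x hx
    obtain ⟨z, hz, hτx⟩ := h (τ ^ i • x) (by rw [smul_smul, ← pow_succ', hx])
    have hx' : τ ^ i • (x - τ ^ (n - 1 - i) • z) = 0 := by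
      rw [smul_sub, smul_smul, ← pow_add, Nat.add_sub_of_le (by omega), hτx, sub_self]
    simpa using P.add_mem (ih (by omega) _ hx') (P.smul_mem (τ ^ (n - 1 - i)) hz)

theorem LinearMap.injective_of_forall_smul_eq_zero {F : Type*} [AddCommGroup F] [Module R F]
    (f : F →ₗ[R] N) (hτ : IsNilpotent τ) (h : ∀ y, τ • y = 0 → f y = 0 → y = 0) :
    Function.Injective f := by
  obtain ⟨n, hn⟩ := hτ
  suffices ∀ i, ∀ y, f y = 0 → τ ^ i • y = 0 → y = 0 by
    rw [← LinearMap.ker_eq_bot, eq_bot_iff]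
    exact fun y hy => this n y hy (by rw [hn, zero_smul])
  intro i
  induction i with
  | zero => intro y _ hy; rwa [pow_zero, one_smul] at hy
  | succ i ih =>
    intro y hfy hy
    refine h y (ih (τ • y) (by rw [map_smul, hfy, smul_zero]) ?_) hfy
    rwa [smul_smul, ← pow_succ]

section Socle

variable {k : Type*} [CommSemiring k] [Algebra k R]

theorem Module.Basis.exists_eq_pow_smul_sum_of_smul_eq_zero {ι : Type*} (b : Basis ι R N)
    (hann : ∀ r : R, r * τ = 0 → ∃ a : k, r = a • τ ^ (n - 1)) (x : N) (hx : τ • x = 0) :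
    ∃ (s : Finset ι) (a : ι → k), x = τ ^ (n - 1) • ∑ i ∈ s, algebraMap k R (a i) • b i := by
  have hcoord : ∀ i, b.repr x i * τ = 0 := fun i => by
    rw [mul_comm, ← smul_eq_mul, ← Finsupp.smul_apply, ← map_smul, hx, map_zero,
      Finsupp.zero_apply]
  choose a ha using fun i => hann _ (hcoord i)
  refine ⟨(b.repr x).support, a, ?_⟩
  conv_lhs => rw [← b.linearCombination_repr x, Finsupp.linearCombination_apply, Finsupp.sum]
  rw [Finset.smul_sum]
  refine Finset.sum_congr rfl fun i _ => ?_
  rw [ha i, smul_smul, Algebra.smul_def, mul_comm]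

theorem Module.Free.exists_eq_pow_smul_of_smul_eq_zero [Module.Free R N]
    (hann : ∀ r : R, r * τ = 0 → ∃ a : k, r = a • τ ^ (n - 1)) (x : N) (hx : τ • x = 0) :
    ∃ y, x = τ ^ (n - 1) • y := by
  obtain ⟨s, a, hx⟩ :=
    (Module.Free.chooseBasis R N).exists_eq_pow_smul_sum_of_smul_eq_zero hann x hx
  exact ⟨_, hx⟩

end Socle

theorem Module.free_of_forall_exists_eq_pow_smul (k : Type*) [Field k] [Algebra k R]
    (hτ : τ ^ n = 0) (hann : ∀ r : R, r * τ = 0 → ∃ a : k, r = a • τ ^ (n - 1))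
    (hcond : ∀ x : N, τ • x = 0 → ∃ y, x = τ ^ (n - 1) • y) : Module.Free R N := by
  let _ : Module k N := Module.compHom N (algebraMap k R)
  have : IsScalarTower k R N := IsScalarTower.of_algebraMap_smul fun _ _ => rfl
  let K : Submodule k N := LinearMap.ker ((LinearMap.lsmul R N τ).restrictScalars k)
  let b := Module.Free.chooseBasis k K
  choose m hm using fun i => hcond (b i) (b i).2
  let φ := Finsupp.linearCombination R m
  have hsurj : Function.Surjective φ := by
    rw [← LinearMap.range_eq_top]
    refine (LinearMap.range φ).eq_top_of_forall_smul_eq_zero hτ fun x hx => ?_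
    have hxK : x ∈ Submodule.span k (Set.range fun i => (b i : N)) := by
      have h := Submodule.mem_map_of_mem (f := K.subtype) (b.mem_span ⟨x, by simpa [K] using hx⟩)
      rwa [Submodule.map_span, ← Set.range_comp] at h
    have hspan : Submodule.span k (Set.range fun i => (b i : N)) ≤
        ((LinearMap.range φ).map (LinearMap.lsmul R N (τ ^ (n - 1)))).restrictScalars k := by
      rw [Submodule.span_le]
      rintro _ ⟨i, rfl⟩
      exact ⟨m i, ⟨Finsupp.single i 1, by simp [φ]⟩, (hm i).symm⟩
    obtain ⟨z, hz, hzx⟩ := hspan hxK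
    exact ⟨z, hz, hzx.symm⟩
  have hinj : Function.Injective φ := by
    refine φ.injective_of_forall_smul_eq_zero ⟨n, hτ⟩ fun y hy hφy => ?_
    obtain ⟨s, a, rfl⟩ := Finsupp.basisSingleOne.exists_eq_pow_smul_sum_of_smul_eq_zero hann y hy
    have hsum : ∑ i ∈ s, a i • (b i : N) = 0 := by
      rw [← hφy, map_smul, map_sum, Finset.smul_sum]
      refine Finset.sum_congr rfl fun i _ => ?_
      rw [map_smul, Finsupp.coe_basisSingleOne, Finsupp.linearCombination_single, one_smul,
        hm, algebraMap_smul, smul_comm]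
    have ha := linearIndependent_iff'.mp (b.linearIndependent.map' K.subtype K.ker_subtype) s a hsum
    rw [Finset.sum_eq_zero fun i hi => by rw [ha i hi, map_zero, zero_smul], smul_zero]
  exact Module.Free.of_equiv (LinearEquiv.ofBijective φ ⟨hinj, hsurj⟩)

theorem exists_eq_smul_of_smul_eq_zero_of_directed {M ι : Type*} [AddCommGroup M] [Module R M]
    [Nonempty ι] {S : ι → Submodule R M} (hS : Directed (· ≤ ·) S) (c : R)
    (h : ∀ i, ∀ x : S i, τ • x = 0 → ∃ y, x = c • y) :
    ∀ x : ↥(⨆ i, S i), τ • x = 0 → ∃ y, x = c • y := by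
  rintro ⟨x, hx⟩ hτx
  obtain ⟨i, hxi⟩ := (Submodule.mem_iSup_of_directed S hS).mp hx
  obtain ⟨y, hy⟩ := h i ⟨x, hxi⟩ (by simpa [Subtype.ext_iff] using hτx)
  exact ⟨⟨y, le_iSup S i y.2⟩, by simpa [Subtype.ext_iff] using hy⟩

end NilpotentAction

section CyclicGroupAlgebra

variable (p : ℕ)

lemma sigma_pow (n : ℕ) :
    sigma p ^ n = MonoidAlgebra.of (ZMod p) _ (Multiplicative.ofAdd (n : ZMod p)) := by
  rw [sigma, ← map_pow, ← ofAdd_nsmul, nsmul_one]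

lemma sigma_pow_self : sigma p ^ p = 1 := by
  rw [sigma_pow, ZMod.natCast_self, ofAdd_zero, map_one]

lemma ZMod.mem_zpowers_ofAdd_one (g : Multiplicative (ZMod p)) :
    g ∈ Subgroup.zpowers (Multiplicative.ofAdd 1) :=
  ⟨(Multiplicative.toAdd g).cast, by
    dsimp only
    rw [← ofAdd_zsmul, zsmul_one, ZMod.intCast_zmod_cast, ofAdd_toAdd]⟩

lemma sum_range_sigma_pow [NeZero p] :
    ∑ i ∈ Finset.range p, sigma p ^ i = ∑ g, MonoidAlgebra.of (ZMod p) _ g := by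
  refine Finset.sum_nbij' (fun i => Multiplicative.ofAdd (i : ZMod p))
    (fun g => (Multiplicative.toAdd g).val) (by simp) (by simp [ZMod.val_lt]) ?_ (by simp) ?_
  · intro i hi
    simp [ZMod.val_cast_of_lt (Finset.mem_range.mp hi)]
  · intro i _
    rw [sigma_pow]

variable [Fact p.Prime]

open Polynomial in
lemma sigma_sub_one_pow_pred :
    (sigma p - 1) ^ (p - 1) = ∑ i ∈ Finset.range p, sigma p ^ i := by
  have h := cyclotomic_mul_prime_eq_pow_of_not_dvd (ZMod p) (n := 1) (p := p)
    (Nat.Prime.not_dvd_one Fact.out)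
  rw [one_mul, cyclotomic_prime, cyclotomic_one] at h
  simpa using congrArg (aeval (sigma p)) h.symm

lemma sigma_sub_one_pow_self : (sigma p - 1) ^ p = 0 :=
  calc (sigma p - 1) ^ p = (sigma p - 1) * (sigma p - 1) ^ (p - 1) := by
        rw [← pow_succ', Nat.sub_add_cancel (Fact.out : p.Prime).one_le]
    _ = 0 := by rw [sigma_sub_one_pow_pred, mul_geom_sum, sigma_pow_self, sub_self]

lemma exists_eq_smul_sigma_sub_one_pow (r : Sp p) (hr : r * (sigma p - 1) = 0) :
    ∃ a : ZMod p, r = a • (sigma p - 1) ^ (p - 1) := by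
  -- `r` is fixed by `σ`, so its coefficients are constant: it is a multiple of `∑ g, g`.
  have hfix : Representation.leftRegular (ZMod p) _ (Multiplicative.ofAdd 1) r = r := by
    rw [mul_sub, mul_one, sub_eq_zero, mul_comm] at hr
    rw [← Representation.asAlgebraHom_of, Representation.asAlgebraHom_ofMulAction_smul_eq_mul]
    exact hr
  refine ⟨r.coeff (Multiplicative.ofAdd 1), ?_⟩
  rw [sigma_sub_one_pow_pred, sum_range_sigma_pow, Finset.smul_sum]
  ext g
  simp [Representation.coeff_of_leftRegular_of_generator _ (ZMod.mem_zpowers_ofAdd_one p) r hfix g]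

end CyclicGroupAlgebra

/-- The union of a nonempty chain of free `𝔽_p[ℤ/p]`-submodules of `M` is a free
submodule of `M`. -/
theorem stmt18 (p : ℕ) [Fact p.Prime]
    (M : Type*) [AddCommGroup M] [Module (Sp p) M]
    (T : Set (Submodule (Sp p) M)) (hne : T.Nonempty) (hchain : IsChain (· ≤ ·) T)
    (hfree : ∀ S ∈ T, Module.Free (Sp p) S) :
    ∃ W : Submodule (Sp p) M, ((W : Set M) = ⋃ S ∈ T, (S : Set M)) ∧
      Module.Free (Sp p) W := by
  have : Nonempty T := hne.to_subtype
  have hdir : Directed (· ≤ ·) (fun S : T => (S : Submodule (Sp p) M)) :=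
    directedOn_iff_directed.mp hchain.directedOn
  have hann := exists_eq_smul_sigma_sub_one_pow p
  refine ⟨⨆ S : T, S, ?_, ?_⟩
  · rw [Submodule.coe_iSup_of_directed _ hdir, Set.iUnion_coe_set]
  refine Module.free_of_forall_exists_eq_pow_smul (ZMod p) (sigma_sub_one_pow_self p) hann ?_
  refine exists_eq_smul_of_smul_eq_zero_of_directed hdir _ fun S => ?_
  have : Module.Free (Sp p) S := hfree S S.2
  exact Module.Free.exists_eq_pow_smul_of_smul_eq_zero (N := (S : Submodule (Sp p) M)) hann
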